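/- The six-qubit entanglement-assisted code corrects an arbitrary single-qubit error on all seven qubits (including Bob's half of the ebit), nondegenerately: with S = span{g1,…,g6} ⊆ (ZMod 2)^7 × (ZMod 2)^7 spanned by the Pauli strings IZIZZZI, IZZIIZZ, ZZIIZIZ, IXXIIXX, IIXXXIX, XXIIXIX, every element of the symplectic orthogonal complement S^⊥ of qubit weight ≤ 2 is the zero vector. -/
import Mathlib


/-- A 7-qubit Pauli operator modulo phase: the pair `(x|z)` of X-components
and Z-components. -/
abbrev PauliVec7 := (Fin 7 → ZMod 2) × (Fin 7 → ZMod 2)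

/-- The symplectic product of `(x|z)` and `(x'|z')`, namely `x·z' + z·x'`.
Two Pauli operators commute iff their symplectic product is `0`. -/
def symp (v w : PauliVec7) : ZMod 2 :=
  (∑ i, v.1 i * w.2 i) + ∑ i, v.2 i * w.1 i

/-- The qubit weight of `(x|z)`: the number of qubits on which the Pauli
operator acts nontrivially. -/
def qwt (v : PauliVec7) : ℕ :=
  (Finset.univ.filter fun i => (v.1 i, v.2 i) ≠ (0, 0)).card

/-- The Pauli string IZIZZZI (first position is Bob's qubit, the rest Alice's). -/
def g1 : PauliVec7 := (![0, 0, 0, 0, 0, 0, 0], ![0, 1, 0, 1, 1, 1, 0])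
/-- The Pauli string IZZIIZZ. -/
def g2 : PauliVec7 := (![0, 0, 0, 0, 0, 0, 0], ![0, 1, 1, 0, 0, 1, 1])
/-- The Pauli string ZZIIZIZ. -/
def g3 : PauliVec7 := (![0, 0, 0, 0, 0, 0, 0], ![1, 1, 0, 0, 1, 0, 1])
/-- The Pauli string IXXIIXX. -/
def g4 : PauliVec7 := (![0, 1, 1, 0, 0, 1, 1], ![0, 0, 0, 0, 0, 0, 0])
/-- The Pauli string IIXXXIX. -/
def g5 : PauliVec7 := (![0, 0, 1, 1, 1, 0, 1], ![0, 0, 0, 0, 0, 0, 0])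
/-- The Pauli string XXIIXIX. -/
def g6 : PauliVec7 := (![1, 1, 0, 0, 1, 0, 1], ![0, 0, 0, 0, 0, 0, 0])

/-- The stabilizer of the six-qubit entanglement-assisted code (on all seven
qubits, including Bob's). -/
def Sea : Submodule (ZMod 2) PauliVec7 :=
  Submodule.span (ZMod 2) ({g1, g2, g3, g4, g5, g6} : Set PauliVec7)

private lemma cv5 {α : Type*} {m : ℕ} (x : α) (u : Fin (m+5) → α) :
    Matrix.vecCons x u 5 =
      Matrix.vecHead (Matrix.vecTail (Matrix.vecTail (Matrix.vecTail (Matrix.vecTail u)))) := rfl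

private lemma cv6 {α : Type*} {m : ℕ} (x : α) (u : Fin (m+6) → α) :
    Matrix.vecCons x u 6 =
      Matrix.vecHead (Matrix.vecTail (Matrix.vecTail (Matrix.vecTail
        (Matrix.vecTail (Matrix.vecTail u))))) := rfl

set_option maxRecDepth 10000 in
set_option synthInstance.maxHeartbeats 1000000 in
set_option maxHeartbeats 1000000 in
set_option synthInstance.maxSize 2000 in
private lemma auxA : ∀ a0 a1 a2 a3 a4 a5 a6 : ZMod 2,
    a1 + a3 + a4 + a5 = 0 → a1 + a2 + a5 + a6 = 0 → a0 + a1 + a4 + a6 = 0 →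
    ((if a0 ≠ 0 then 1 else 0) + (if a1 ≠ 0 then 1 else 0) + (if a2 ≠ 0 then 1 else 0)
      + (if a3 ≠ 0 then 1 else 0) + (if a4 ≠ 0 then 1 else 0) + (if a5 ≠ 0 then 1 else 0)
      + (if a6 ≠ 0 then 1 else 0) : ℕ) ≤ 2 →
    a0 = 0 ∧ a1 = 0 ∧ a2 = 0 ∧ a3 = 0 ∧ a4 = 0 ∧ a5 = 0 ∧ a6 = 0 := by
  decide

set_option maxRecDepth 10000 in
set_option synthInstance.maxHeartbeats 1000000 in
set_option maxHeartbeats 1000000 in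
set_option synthInstance.maxSize 2000 in
private lemma auxB : ∀ b0 b1 b2 b3 b4 b5 b6 : ZMod 2,
    b1 + b2 + b5 + b6 = 0 → b2 + b3 + b4 + b6 = 0 → b0 + b1 + b4 + b6 = 0 →
    ((if b0 ≠ 0 then 1 else 0) + (if b1 ≠ 0 then 1 else 0) + (if b2 ≠ 0 then 1 else 0)
      + (if b3 ≠ 0 then 1 else 0) + (if b4 ≠ 0 then 1 else 0) + (if b5 ≠ 0 then 1 else 0)
      + (if b6 ≠ 0 then 1 else 0) : ℕ) ≤ 2 →
    b0 = 0 ∧ b1 = 0 ∧ b2 = 0 ∧ b3 = 0 ∧ b4 = 0 ∧ b5 = 0 ∧ b6 = 0 := by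
  decide


/-- The six-qubit entanglement-assisted code corrects an arbitrary single-qubit
error on all seven qubits (including Bob's half of the ebit), nondegenerately:
every element of the symplectic orthogonal complement `Sea^⊥` of qubit weight
at most 2 is zero. -/
theorem ea_six_qubit_code_nondegenerate_distance_three :
    ∀ v : PauliVec7, (∀ s ∈ Sea, symp v s = 0) → qwt v ≤ 2 → v = 0 := by
  intro v h hw
  have mem : ∀ g ∈ ({g1, g2, g3, g4, g5, g6} : Set PauliVec7), g ∈ Sea :=
    fun g hg => Submodule.subset_span hg
  have h1 := h g1 (mem g1 (by simp))
  have h2 := h g2 (mem g2 (by simp))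
  have h3 := h g3 (mem g3 (by simp))
  have h4 := h g4 (mem g4 (by simp))
  have h5 := h g5 (mem g5 (by simp))
  have h6 := h g6 (mem g6 (by simp))
  simp only [symp, g1, g2, g3, g4, g5, g6, Fin.sum_univ_seven] at h1 h2 h3 h4 h5 h6
  simp [cv5, cv6] at h1 h2 h3 h4 h5 h6
  have hwA : (Finset.univ.filter fun i => v.1 i ≠ 0).card ≤ 2 := by
    refine le_trans (Finset.card_le_card ?_) hw
    intro i hi
    simp only [Finset.mem_filter, Finset.mem_univ, true_and, ne_eq, Prod.mk.injEq,
      not_and] at *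
    exact fun h' => absurd h' hi
  have hwB : (Finset.univ.filter fun i => v.2 i ≠ 0).card ≤ 2 := by
    refine le_trans (Finset.card_le_card ?_) hw
    intro i hi
    simp only [Finset.mem_filter, Finset.mem_univ, true_and, ne_eq, Prod.mk.injEq,
      not_and] at *
    exact fun _ => hi
  rw [Finset.card_filter, Fin.sum_univ_seven] at hwA hwB
  have hA := auxA (v.1 0) (v.1 1) (v.1 2) (v.1 3) (v.1 4) (v.1 5) (v.1 6) h1 h2 h3 hwA
  have hB := auxB (v.2 0) (v.2 1) (v.2 2) (v.2 3) (v.2 4) (v.2 5) (v.2 6) h4 h5 h6 hwB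
  obtain ⟨a0, a1, a2, a3, a4, a5, a6⟩ := hA
  obtain ⟨b0, b1, b2, b3, b4, b5, b6⟩ := hB
  refine Prod.ext ?_ ?_ <;> funext i <;> fin_cases i <;> assumption
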